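/- (Secrecy gain of E₈.) For every real y > 0, the secrecy function of the E₈ lattice satisfies Ξ_{E₈}(y) = (1 − z(y))^{-1} ≤ (1 − z(1))^{-1} = 4/3 = Ξ_{E₈}(1); that is, 2 θ₃(y)⁸ / (θ₂(y)⁸ + θ₃(y)⁸ + θ₄(y)⁸) ≤ 4/3, with equality at y = 1. -/

import Mathlib

/-- Jacobi theta constant θ₂ on the imaginary axis. -/
noncomputable def theta2 (y : ℝ) : ℝ := ∑' n : ℤ, Real.exp (-Real.pi * y * (n + 1/2)^2)

/-- Jacobi theta constant θ₃ on the imaginary axis. -/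
noncomputable def theta3 (y : ℝ) : ℝ := ∑' n : ℤ, Real.exp (-Real.pi * y * n^2)

/-- Jacobi theta constant θ₄ on the imaginary axis. -/
noncomputable def theta4 (y : ℝ) : ℝ := ∑' n : ℤ, (-1 : ℝ)^n * Real.exp (-Real.pi * y * n^2)

/-- The function z(y) = θ₂(y)⁴θ₄(y)⁴/θ₃(y)⁸. -/
noncomputable def zfun (y : ℝ) : ℝ := theta2 y ^ 4 * theta4 y ^ 4 / theta3 y ^ 8

/-!
The heart of the matter is Jacobi's identity `θ₂⁴ + θ₄⁴ = θ₃⁴`. Writing `s = θ₂⁴`, `t = θ₄⁴`, it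
turns the secrecy function into `2(s + t)² / (s² + (s + t)² + t²) = (1 - st/(s + t)²)⁻¹`, and
`st/(s + t)² ≤ 1/4` by AM-GM, with equality iff `s = t`. At `y = 1` indeed `θ₂ = θ₄`, by the
transformation `θ₂(y) = y^{-1/2} θ₄(1/y)`.

Jacobi's identity follows from the duplication formulas `θ₃(y)² = θ₃(2y)² + θ₂(2y)²`,
`θ₄(y)² = θ₃(2y)² - θ₂(2y)²` and `θ₂(y)² = 2θ₂(2y)θ₃(2y)`: each square is a sum over `ℤ²`, and
splitting `ℤ²` by the parity of `m + n` with `(m, n) = (a + b, a - b)` or `(a - b, a + b + 1)`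
turns `m² + n²` into `2a² + 2b²` resp. `2(a + 1/2)² + 2(b + 1/2)²`.
-/

open Real

lemma summable_exp_neg_mul_add_sq {y : ℝ} (hy : 0 < y) (a : ℝ) :
    Summable fun n : ℤ => exp (-π * y * (n + a) ^ 2) := by
  have hterm := (summable_jacobiTheta₂_term_iff (a * y * Complex.I) (y * Complex.I)).2
    (by simpa using hy)
  refine (hterm.norm.mul_left (exp (-π * y * a ^ 2))).congr fun n => ?_
  rw [norm_jacobiTheta₂_term, ← exp_add]
  simp only [Complex.mul_re, Complex.mul_im, Complex.ofReal_re, Complex.ofReal_im, Complex.I_re,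
    Complex.I_im]
  ring_nf

theorem hasSum_mul_of_summable_norm {ι ι' R : Type*} [NormedRing R] [CompleteSpace R]
    {f : ι → R} {g : ι' → R}
    (hf : Summable fun i => ‖f i‖) (hg : Summable fun j => ‖g j‖) :
    HasSum (fun p : ι × ι' => f p.1 * g p.2) ((∑' i, f i) * ∑' j, g j) :=
  tsum_mul_tsum_of_summable_norm hf hg ▸ (summable_mul_of_summable_norm hf hg).hasSum

theorem hasSum_add_of_parity {M : Type*} [AddCommMonoid M] [TopologicalSpace M] [ContinuousAdd M]
    {f : ℤ × ℤ → M} {A B : M}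
    (hA : HasSum (fun p : ℤ × ℤ => f (p.1 + p.2, p.1 - p.2)) A)
    (hB : HasSum (fun p : ℤ × ℤ => f (p.1 - p.2, p.1 + p.2 + 1)) B) :
    HasSum f (A + B) := by
  let i : ℤ × ℤ → ℤ × ℤ := fun p => (p.1 + p.2, p.1 - p.2)
  let j : ℤ × ℤ → ℤ × ℤ := fun p => (p.1 - p.2, p.1 + p.2 + 1)
  have hi : i.Injective := fun p q h => by
    simp only [i, Prod.mk.injEq] at h
    ext <;> omega
  have hj : j.Injective := fun p q h => by
    simp only [j, Prod.mk.injEq] at h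
    ext <;> omega
  have hrange : Set.range j = (Set.range i)ᶜ := by
    ext ⟨m, n⟩
    simp only [Set.mem_range, Set.mem_compl_iff, Prod.exists, not_exists, i, j, Prod.mk.injEq]
    constructor
    · rintro ⟨a, b, rfl, rfl⟩ c d ⟨h1, h2⟩
      omega
    · intro h
      rcases Int.even_or_odd (m + n) with ⟨c, hc⟩ | ⟨c, hc⟩
      · exact (h c (m - c) ⟨by omega, by omega⟩).elim
      · exact ⟨c, c - m, by omega, by omega⟩
  have hA' : HasSum (f ∘ Subtype.val : Set.range i → M) A :=
    (Equiv.ofInjective i hi).hasSum_iff.1 hA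
  have hB' : HasSum (f ∘ Subtype.val : Set.range j → M) B :=
    (Equiv.ofInjective j hj).hasSum_iff.1 hB
  rw [hrange] at hB'
  exact hA'.add_isCompl isCompl_compl hB'

theorem hasSum_neg_one_zpow_add_mul_of_parity {K : Type*} [DivisionRing K] [TopologicalSpace K]
    [IsTopologicalAddGroup K] {f : ℤ × ℤ → K} {A B : K}
    (hA : HasSum (fun p : ℤ × ℤ => f (p.1 + p.2, p.1 - p.2)) A)
    (hB : HasSum (fun p : ℤ × ℤ => f (p.1 - p.2, p.1 + p.2 + 1)) B) :
    HasSum (fun p : ℤ × ℤ => (-1 : K) ^ (p.1 + p.2) * f p) (A - B) := by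
  rw [sub_eq_add_neg]
  refine hasSum_add_of_parity (hA.congr_fun fun p => ?_) (hB.neg.congr_fun fun p => ?_)
  · rw [show p.1 + p.2 + (p.1 - p.2) = 2 * p.1 by ring, (even_two_mul p.1).neg_one_zpow, one_mul]
  · rw [show p.1 - p.2 + (p.1 + p.2 + 1) = 2 * p.1 + 1 by ring,
      (odd_two_mul_add_one p.1).neg_one_zpow, neg_one_mul]

section ThetaDuplication

variable {y : ℝ}

lemma summable_norm_theta3_term (hy : 0 < y) : Summable fun n : ℤ => ‖exp (-π * y * n ^ 2)‖ := by
  simpa only [Real.norm_eq_abs, abs_exp, add_zero] using summable_exp_neg_mul_add_sq hy 0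

lemma summable_norm_theta2_term (hy : 0 < y) :
    Summable fun n : ℤ => ‖exp (-π * y * (n + 1 / 2) ^ 2)‖ := by
  simpa only [Real.norm_eq_abs, abs_exp] using summable_exp_neg_mul_add_sq hy (1 / 2)

lemma summable_norm_theta4_term (hy : 0 < y) :
    Summable fun n : ℤ => ‖(-1 : ℝ) ^ n * exp (-π * y * n ^ 2)‖ := by
  simpa only [norm_mul, norm_zpow, norm_neg, norm_one, one_zpow, one_mul]
    using summable_norm_theta3_term hy

lemma theta2_pos (hy : 0 < y) : 0 < theta2 y :=
  (summable_norm_theta2_term hy).of_norm.tsum_pos (fun _ => (exp_pos _).le) 0 (exp_pos _)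

lemma hasSum_theta3_two_mul_sq (hy : 0 < y) :
    HasSum (fun p : ℤ × ℤ => exp (-π * y * ((p.1 + p.2 : ℤ) : ℝ) ^ 2) *
      exp (-π * y * ((p.1 - p.2 : ℤ) : ℝ) ^ 2)) (theta3 (2 * y) ^ 2) := by
  have hy2 : 0 < 2 * y := by linarith
  rw [sq]
  refine (hasSum_mul_of_summable_norm (summable_norm_theta3_term hy2)
    (summable_norm_theta3_term hy2)).congr_fun fun p => ?_
  rw [← exp_add, ← exp_add]
  push_cast
  ring_nf

lemma hasSum_theta2_two_mul_sq (hy : 0 < y) :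
    HasSum (fun p : ℤ × ℤ => exp (-π * y * ((p.1 - p.2 : ℤ) : ℝ) ^ 2) *
      exp (-π * y * ((p.1 + p.2 + 1 : ℤ) : ℝ) ^ 2)) (theta2 (2 * y) ^ 2) := by
  have hy2 : 0 < 2 * y := by linarith
  rw [sq]
  refine (hasSum_mul_of_summable_norm (summable_norm_theta2_term hy2)
    (summable_norm_theta2_term hy2)).congr_fun fun p => ?_
  rw [← exp_add, ← exp_add]
  push_cast
  ring_nf

lemma hasSum_theta2_mul_theta3_two_mul (hy : 0 < y) :
    HasSum (fun p : ℤ × ℤ => exp (-π * y * ((p.1 + p.2 : ℤ) + 1 / 2 : ℝ) ^ 2) *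
      exp (-π * y * ((p.1 - p.2 : ℤ) + 1 / 2 : ℝ) ^ 2))
      (theta2 (2 * y) * theta3 (2 * y)) := by
  have hy2 : 0 < 2 * y := by linarith
  refine (hasSum_mul_of_summable_norm (summable_norm_theta2_term hy2)
    (summable_norm_theta3_term hy2)).congr_fun fun p => ?_
  rw [← exp_add, ← exp_add]
  push_cast
  ring_nf

lemma hasSum_theta3_mul_theta2_two_mul (hy : 0 < y) :
    HasSum (fun p : ℤ × ℤ => exp (-π * y * ((p.1 - p.2 : ℤ) + 1 / 2 : ℝ) ^ 2) *
      exp (-π * y * ((p.1 + p.2 + 1 : ℤ) + 1 / 2 : ℝ) ^ 2))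
      (theta3 (2 * y) * theta2 (2 * y)) := by
  have hy2 : 0 < 2 * y := by linarith
  have h := hasSum_mul_of_summable_norm (summable_norm_theta3_term hy2)
    (summable_norm_theta2_term hy2)
  refine (((Equiv.addRight 1).prodCongr (Equiv.refl ℤ)).hasSum_iff.2 h).congr_fun fun p => ?_
  simp only [Function.comp_apply, Equiv.prodCongr_apply, Equiv.coe_refl, Prod.map,
    Equiv.coe_addRight, id]
  rw [← exp_add, ← exp_add]
  push_cast
  ring_nf

theorem theta3_sq (hy : 0 < y) : theta3 y ^ 2 = theta3 (2 * y) ^ 2 + theta2 (2 * y) ^ 2 := by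
  rw [sq]
  exact (hasSum_mul_of_summable_norm (summable_norm_theta3_term hy)
    (summable_norm_theta3_term hy)).unique
    (hasSum_add_of_parity (hasSum_theta3_two_mul_sq hy) (hasSum_theta2_two_mul_sq hy))

theorem theta4_sq (hy : 0 < y) : theta4 y ^ 2 = theta3 (2 * y) ^ 2 - theta2 (2 * y) ^ 2 := by
  rw [sq]
  refine (hasSum_mul_of_summable_norm (summable_norm_theta4_term hy)
    (summable_norm_theta4_term hy)).unique ?_
  refine (hasSum_neg_one_zpow_add_mul_of_parity
    (f := fun p => exp (-π * y * (p.1 : ℝ) ^ 2) * exp (-π * y * (p.2 : ℝ) ^ 2))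
    (hasSum_theta3_two_mul_sq hy) (hasSum_theta2_two_mul_sq hy)).congr_fun fun p => ?_
  rw [zpow_add₀ (by norm_num)]
  ring

theorem theta2_sq (hy : 0 < y) : theta2 y ^ 2 = 2 * theta2 (2 * y) * theta3 (2 * y) := by
  have h := hasSum_add_of_parity
    (f := fun p => exp (-π * y * ((p.1 : ℝ) + 1 / 2) ^ 2) *
      exp (-π * y * ((p.2 : ℝ) + 1 / 2) ^ 2))
    (hasSum_theta2_mul_theta3_two_mul hy) (hasSum_theta3_mul_theta2_two_mul hy)
  have hsq : HasSum _ (theta2 y * theta2 y) :=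
    hasSum_mul_of_summable_norm (summable_norm_theta2_term hy) (summable_norm_theta2_term hy)
  rw [sq, hsq.unique h]
  ring

theorem theta2_pow_four_add_theta4_pow_four (hy : 0 < y) :
    theta2 y ^ 4 + theta4 y ^ 4 = theta3 y ^ 4 := by
  calc theta2 y ^ 4 + theta4 y ^ 4 = (theta2 y ^ 2) ^ 2 + (theta4 y ^ 2) ^ 2 := by ring
    _ = (theta3 y ^ 2) ^ 2 := by rw [theta2_sq hy, theta3_sq hy, theta4_sq hy]; ring
    _ = theta3 y ^ 4 := by ring

end ThetaDuplication

section
open Complex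

lemma ofReal_theta4 (y : ℝ) : (theta4 y : ℂ) = jacobiTheta₂ (1 / 2) (y * I) := by
  rw [theta4, ofReal_tsum, jacobiTheta₂]
  congr 1 with n
  have hexponent : 2 * π * I * n * (1 / 2) + π * I * n ^ 2 * (y * I)
      = n * (π * I) + (-π * y * n ^ 2 : ℝ) := by
    push_cast
    linear_combination (π * y * n ^ 2) * I_mul_I
  rw [jacobiTheta₂_term, hexponent, Complex.exp_add, exp_int_mul, exp_pi_mul_I]
  push_cast
  rfl

lemma ofReal_theta2 (y : ℝ) :
    (theta2 y : ℂ) = cexp (-π * y / 4) * jacobiTheta₂ (y * I / 2) (y * I) := by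
  rw [theta2, ofReal_tsum, jacobiTheta₂, ← tsum_mul_left]
  congr 1 with n
  rw [jacobiTheta₂_term, ← Complex.exp_add, ofReal_exp]
  push_cast
  congr 1
  linear_combination (-(π * y) * n ^ 2 - π * y * n) * I_mul_I

theorem theta2_eq_inv_sqrt_mul_theta4_inv {y : ℝ} (hy : 0 < y) :
    theta2 y = (√y)⁻¹ * theta4 y⁻¹ := by
  have hy0 : (y : ℂ) ≠ 0 := ofReal_ne_zero.2 hy.ne'
  have hmodular := jacobiTheta₂_functional_equation (y * I / 2) (y * I)
  have hτ : -I * (y * I) = y := by linear_combination (-(y : ℂ)) * I_mul_I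
  have hz : y * I / 2 / (y * I) = 1 / 2 := by field_simp
  have hτ_inv : -1 / (y * I) = (y⁻¹ : ℝ) * I := by
    push_cast
    field_simp
    exact I_sq.symm
  have hexponent : -π * I * (y * I / 2) ^ 2 / (y * I) = π * y / 4 := by
    field_simp
    norm_num [I_sq]
  have hsqrt : (y : ℂ) ^ (1 / 2 : ℂ) = (√y : ℝ) := by
    rw [Real.sqrt_eq_rpow, ofReal_cpow hy.le]
    norm_num
  apply ofReal_injective
  rw [ofReal_theta2, hmodular, hτ, hz, hτ_inv, hexponent, hsqrt, ← ofReal_theta4]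
  have hexp : cexp (-π * y / 4) * cexp (π * y / 4) = 1 := by
    rw [← Complex.exp_add, neg_mul, neg_div, neg_add_cancel, Complex.exp_zero]
  push_cast
  linear_combination (theta4 y⁻¹ * (1 / √y) : ℂ) * hexp

end

lemma theta2_one_eq_theta4_one : theta2 1 = theta4 1 := by
  simpa using theta2_eq_inv_sqrt_mul_theta4_inv one_pos

lemma mul_div_add_sq_le_quarter (s t : ℝ) : s * t / (s + t) ^ 2 ≤ 1 / 4 :=
  div_le_of_le_mul₀ (sq_nonneg _) (by norm_num) (by nlinarith [four_mul_le_sq_add s t])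

lemma two_mul_sq_div_eq_inv_one_sub {s t : ℝ} (h : s + t ≠ 0) :
    2 * (s + t) ^ 2 / (s ^ 2 + (s + t) ^ 2 + t ^ 2) = (1 - s * t / (s + t) ^ 2)⁻¹ := by
  have hp : 0 < (s + t) ^ 2 := by positivity
  have hq : 0 < s ^ 2 + (s + t) ^ 2 + t ^ 2 := by positivity
  have hr : 0 < (s + t) ^ 2 - s * t := by nlinarith [sq_nonneg s, sq_nonneg t]
  rw [one_sub_div hp.ne', inv_div, div_eq_div_iff hq.ne' hr.ne']
  ring

lemma theta2_pow_four_add_theta4_pow_four_ne_zero {y : ℝ} (hy : 0 < y) :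
    theta2 y ^ 4 + theta4 y ^ 4 ≠ 0 := by
  have := theta2_pos hy
  positivity

lemma zfun_eq {y : ℝ} (hy : 0 < y) :
    zfun y = theta2 y ^ 4 * theta4 y ^ 4 / (theta2 y ^ 4 + theta4 y ^ 4) ^ 2 := by
  rw [zfun, theta2_pow_four_add_theta4_pow_four hy]
  ring

lemma two_mul_theta3_pow_eight_div_eq_inv_one_sub_zfun {y : ℝ} (hy : 0 < y) :
    2 * theta3 y ^ 8 / (theta2 y ^ 8 + theta3 y ^ 8 + theta4 y ^ 8) = (1 - zfun y)⁻¹ := by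
  rw [zfun_eq hy,
    ← two_mul_sq_div_eq_inv_one_sub (theta2_pow_four_add_theta4_pow_four_ne_zero hy),
    theta2_pow_four_add_theta4_pow_four hy]
  ring

lemma zfun_le_quarter {y : ℝ} (hy : 0 < y) : zfun y ≤ 1 / 4 :=
  zfun_eq hy ▸ mul_div_add_sq_le_quarter _ _

lemma zfun_one : zfun 1 = 1 / 4 := by
  have h := (theta2_pos one_pos).ne'
  rw [zfun_eq one_pos, ← theta2_one_eq_theta4_one]
  field_simp
  ring

theorem secrecy_gain_E8 :
    (∀ y : ℝ, 0 < y →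
      2 * theta3 y ^ 8 / (theta2 y ^ 8 + theta3 y ^ 8 + theta4 y ^ 8) = (1 - zfun y)⁻¹ ∧
      (1 - zfun y)⁻¹ ≤ (1 - zfun 1)⁻¹) ∧
    (1 - zfun 1)⁻¹ = 4 / 3 := by
  have hz1 : (1 - zfun 1)⁻¹ = 4 / 3 := by
    rw [zfun_one]
    norm_num
  refine ⟨fun y hy => ⟨two_mul_theta3_pow_eight_div_eq_inv_one_sub_zfun hy, ?_⟩, hz1⟩
  calc (1 - zfun y)⁻¹ ≤ (1 - 1 / 4)⁻¹ :=
        inv_anti₀ (by norm_num) (by linarith [zfun_le_quarter hy])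
    _ = (1 - zfun 1)⁻¹ := by rw [zfun_one]
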